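/- arXiv:2601.09409 — 2 statements merged into one kernel-verified Lean document; each statement's English description precedes it below -/
import Mathlib

section
/- Let Σ be an alphabet and A a reversible weighted automaton over the field ZMod 2 and Σ with exactly one initial state. Then there exists a language L ⊆ List Σ recognized by a reversible NFA over Σ with exactly one initial state such that ‖A‖ is the characteristic series 𝟙_L of L over ZMod 2. -/
open Matrix

namespace RevWA

/-- A weighted automaton over a semiring `S` and alphabet `α`, given by a linear
representation: number of states `n`, initial weight vector, transition matrices,
and final weight vector. -/
structure WA (S : Type) [Semiring S] (α : Type) where
  n : ℕ
  init : Fin n → S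
  trans : α → Matrix (Fin n) (Fin n) S
  final : Fin n → S

variable {S : Type} [Semiring S] {α : Type}

/-- The matrix associated to a word: product of the transition matrices of its letters. -/
def WA.matWord (A : WA S α) (w : List α) : Matrix (Fin A.n) (Fin A.n) S :=
  (w.map A.trans).prod

/-- The series realized by a weighted automaton: `i ⬝ μ(w) ⬝ f`. -/
def WA.series (A : WA S α) : List α → S :=
  fun w => A.init ⬝ᵥ (A.matWord w).mulVec A.final

/-- A matrix has at most one nonzero entry in each row. -/
def rowOk {n : ℕ} (M : Matrix (Fin n) (Fin n) S) : Prop :=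
  ∀ i j j', M i j ≠ 0 → M i j' ≠ 0 → j = j'

/-- A matrix has at most one nonzero entry in each column. -/
def colOk {n : ℕ} (M : Matrix (Fin n) (Fin n) S) : Prop :=
  ∀ i i' j, M i j ≠ 0 → M i' j ≠ 0 → i = i'

/-- A weighted automaton is reversible if each transition matrix has at most one
nonzero entry in each row and at most one nonzero entry in each column. -/
def WA.Reversible (A : WA S α) : Prop :=
  ∀ a : α, rowOk (A.trans a) ∧ colOk (A.trans a)

/-- A weighted automaton has exactly one initial state. -/
def WA.OneInitial (A : WA S α) : Prop :=
  ∃! q : Fin A.n, A.init q ≠ 0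

/-- `Rev S α`: series realized by reversible weighted automata over `S` and `α`. -/
def Rev (S : Type) [Semiring S] (α : Type) : Set (List α → S) :=
  {r | ∃ A : WA S α, A.Reversible ∧ A.series = r}

/-- `Rev₁ S α`: series realized by reversible weighted automata over `S` and `α`
with exactly one initial state. -/
def Rev1 (S : Type) [Semiring S] (α : Type) : Set (List α → S) :=
  {r | ∃ A : WA S α, A.Reversible ∧ A.OneInitial ∧ A.series = r}

/-- The support of a series. -/
def supp (r : List α → S) : Set (List α) :=
  {w | r w ≠ 0}

/-- `RevL S α`: supports of series realized by reversible weighted automata. -/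
def RevL (S : Type) [Semiring S] (α : Type) : Set (Set (List α)) :=
  {L | ∃ r ∈ Rev S α, supp r = L}

/-- `RevL₁ S α`: supports of series realized by reversible weighted automata with
exactly one initial state. -/
def RevL1 (S : Type) [Semiring S] (α : Type) : Set (Set (List α)) :=
  {L | ∃ r ∈ Rev1 S α, supp r = L}

/-- The characteristic series of a language `L` over `S`. -/
noncomputable def charSeries (S : Type) [Semiring S] {α : Type} (L : Set (List α)) :
    List α → S :=
  L.indicator 1

/-- A reversible nondeterministic finite automaton: deterministic and
codeterministic transition relation. -/
structure RevNFA (α : Type) where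
  Q : Type
  fintypeQ : Fintype Q
  δ : Q → α → Q → Prop
  I : Set Q
  F : Set Q
  det : ∀ p a q q', δ p a q → δ p a q' → q = q'
  codet : ∀ p p' a q, δ p a q → δ p' a q → p = p'

/-- Paths in a reversible NFA. -/
inductive RevNFA.Path {α : Type} (A : RevNFA α) : A.Q → List α → A.Q → Prop
  | nil (q : A.Q) : RevNFA.Path A q [] q
  | cons {p q r : A.Q} {a : α} {w : List α} :
      A.δ p a q → RevNFA.Path A q w r → RevNFA.Path A p (a :: w) r

/-- The language recognized by a reversible NFA. -/
def RevNFA.lang {α : Type} (A : RevNFA α) : Set (List α) :=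
  {w | ∃ p ∈ A.I, ∃ q ∈ A.F, A.Path p w q}

/-- A reversible NFA has exactly one initial state. -/
def RevNFA.OneInitial {α : Type} (A : RevNFA α) : Prop :=
  ∃ q : A.Q, A.I = {q}

/-- `RevL(𝔹,α)`: languages recognized by reversible NFAs. -/
def RevLB (α : Type) : Set (Set (List α)) :=
  {L | ∃ A : RevNFA α, A.lang = L}

/-- `RevL₁(𝔹,α)`: languages recognized by reversible NFAs with exactly one
initial state. -/
def RevL1B (α : Type) : Set (Set (List α)) :=
  {L | ∃ A : RevNFA α, A.OneInitial ∧ A.lang = L}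

end RevWA

/-!
Over `ZMod 2` every nonzero weight is `1`. Each `μ(a)` has at most one nonzero entry per row,
hence so does every `μ(w)`; with a single initial state `q₀` the sum
`‖A‖(w) = ∑ p, μ(w) q₀ p * f p` therefore has at most one nonzero summand. So `‖A‖(w)` is `0` or
`1`, and it is `1` exactly when the automaton of nonzero entries of `A` has a path labelled `w`
from `q₀` to a final state.
-/

namespace RevWA

namespace RevNFA

variable {α : Type} {B : RevNFA α}

theorem path_nil_iff {p r : B.Q} : B.Path p [] r ↔ p = r :=
  ⟨fun | .nil _ => rfl, fun h => h ▸ .nil p⟩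

theorem path_cons_iff {p r : B.Q} {a : α} {w : List α} :
    B.Path p (a :: w) r ↔ ∃ q, B.δ p a q ∧ B.Path q w r :=
  ⟨fun | .cons hδ hw => ⟨_, hδ, hw⟩, fun ⟨_, hδ, hw⟩ => .cons hδ hw⟩

end RevNFA

section Semiring

variable {S : Type} [Semiring S] {ι : Type} [Fintype ι]

theorem exists_ne_zero_of_dotProduct_ne_zero {u v : ι → S} (h : u ⬝ᵥ v ≠ 0) :
    ∃ k, u k ≠ 0 ∧ v k ≠ 0 := by
  obtain ⟨k, -, hk⟩ := Finset.exists_ne_zero_of_sum_ne_zero h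
  exact ⟨k, left_ne_zero_of_mul hk, right_ne_zero_of_mul hk⟩

theorem dotProduct_ne_zero_iff [NoZeroDivisors S] {u v : ι → S}
    (hu : ∀ k k', u k ≠ 0 → u k' ≠ 0 → k = k') :
    u ⬝ᵥ v ≠ 0 ↔ ∃ k, u k ≠ 0 ∧ v k ≠ 0 := by
  refine ⟨exists_ne_zero_of_dotProduct_ne_zero, fun ⟨k, huk, hvk⟩ => ?_⟩
  have hsingle : u ⬝ᵥ v = u k * v k := by
    refine Finset.sum_eq_single k (fun j _ hjk => ?_) (fun hk => absurd (Finset.mem_univ k) hk)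
    have huj : u j = 0 := by_contra fun huj => hjk (hu j k huj huk)
    rw [huj, zero_mul]
  rw [hsingle]
  exact mul_ne_zero huk hvk

variable {n : ℕ}

theorem rowOk_one : rowOk (1 : Matrix (Fin n) (Fin n) S) := by
  intro i j j' hj hj'
  have hdiag : ∀ k, (1 : Matrix (Fin n) (Fin n) S) i k ≠ 0 → i = k :=
    fun _ hk => by_contra fun hik => hk (Matrix.one_apply_ne hik)
  exact (hdiag j hj).symm.trans (hdiag j' hj')

theorem rowOk.mul {M N : Matrix (Fin n) (Fin n) S} (hM : rowOk M) (hN : rowOk N) :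
    rowOk (M * N) := by
  intro i j j' hj hj'
  obtain ⟨k, hik, hkj⟩ := exists_ne_zero_of_dotProduct_ne_zero hj
  obtain ⟨k', hik', hkj'⟩ := exists_ne_zero_of_dotProduct_ne_zero hj'
  obtain rfl := hM i k k' hik hik'
  exact hN k j j' hkj hkj'

namespace WA

variable {α : Type} (A : WA S α)

@[simp]
theorem matWord_nil : A.matWord [] = 1 := rfl

@[simp]
theorem matWord_cons (a : α) (w : List α) : A.matWord (a :: w) = A.trans a * A.matWord w :=
  List.prod_cons

theorem rowOk_matWord (hA : ∀ a, rowOk (A.trans a)) (w : List α) : rowOk (A.matWord w) := by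
  induction w with
  | nil => exact rowOk_one
  | cons a w ih => exact (hA a).mul ih

def toRevNFA (hA : A.Reversible) : RevNFA α where
  Q := Fin A.n
  fintypeQ := inferInstance
  δ p a q := A.trans a p q ≠ 0
  I := {q | A.init q ≠ 0}
  F := {q | A.final q ≠ 0}
  det p a _ _ := (hA a).1 p _ _
  codet _ _ a q := (hA a).2 _ _ q

theorem oneInitial_toRevNFA (hA : A.Reversible) (hone : A.OneInitial) :
    (A.toRevNFA hA).OneInitial :=
  let ⟨q₀, hq₀, huniq⟩ := hone
  ⟨q₀, Set.eq_singleton_iff_unique_mem.mpr ⟨hq₀, huniq⟩⟩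

theorem matWord_ne_zero_iff_path [NoZeroDivisors S] [Nontrivial S] (hA : A.Reversible)
    {w : List α} {p r : Fin A.n} : A.matWord w p r ≠ 0 ↔ (A.toRevNFA hA).Path p w r := by
  induction w generalizing p with
  | nil =>
    have hdiag : (1 : Matrix (Fin A.n) (Fin A.n) S) p r ≠ 0 ↔ p = r := by
      simp [Matrix.one_apply]
    exact hdiag.trans (RevNFA.path_nil_iff (B := A.toRevNFA hA)).symm
  | cons a w ih =>
    rw [matWord_cons, Matrix.mul_apply', dotProduct_ne_zero_iff ((hA a).1 p)]
    exact (exists_congr fun q => and_congr Iff.rfl ih).trans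
      (RevNFA.path_cons_iff (B := A.toRevNFA hA)).symm

theorem lang_toRevNFA [NoZeroDivisors S] [Nontrivial S] (hA : A.Reversible)
    (hinit : ∀ q q', A.init q ≠ 0 → A.init q' ≠ 0 → q = q') :
    (A.toRevNFA hA).lang = supp A.series := by
  ext w
  symm
  change A.init ⬝ᵥ (A.matWord w *ᵥ A.final) ≠ 0 ↔ _
  rw [dotProduct_ne_zero_iff hinit]
  refine exists_congr fun p => and_congr Iff.rfl ?_
  exact (dotProduct_ne_zero_iff (A.rowOk_matWord (fun a => (hA a).1) w p)).trans <|
    exists_congr fun q => and_comm.trans (and_congr Iff.rfl (A.matWord_ne_zero_iff_path hA))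

end WA

end Semiring

theorem eq_charSeries_supp {α : Type} (r : List α → ZMod 2) :
    r = charSeries (ZMod 2) (supp r) := by
  funext w
  by_cases h : r w = 0
  · rw [charSeries, Set.indicator_of_notMem (not_not.mpr h)]
    exact h
  · rw [charSeries, Set.indicator_of_mem h]
    exact Fin.eq_one_of_ne_zero _ h

end RevWA

open RevWA in
theorem stmt3_general (α : Type)
    (A : WA (ZMod 2) α) (hrev : A.Reversible) (hone : A.OneInitial) :
    ∃ L ∈ RevL1B α, A.series = charSeries (ZMod 2) L :=
  ⟨supp A.series,
    ⟨A.toRevNFA hrev, A.oneInitial_toRevNFA hrev hone,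
      A.lang_toRevNFA hrev fun _ _ => hone.unique⟩,
    eq_charSeries_supp A.series⟩

open RevWA in
theorem stmt3 (α : Type) [Fintype α] [Nonempty α]
    (A : WA (ZMod 2) α) (hrev : A.Reversible) (hone : A.OneInitial) :
    ∃ L ∈ RevL1B α, A.series = charSeries (ZMod 2) L :=
  stmt3_general α A hrev hone
end

section
/- Let Σ be an alphabet. If L, K ∈ RevL(ZMod 2, Σ), then both L ∩ K and L ∪ K belong to RevL(ZMod 2, Σ). -/
open Matrix

/-! Reversibility survives two constructions on automata: the disjoint union, whose transition
matrices are block diagonal and which realizes `r + s`, and the Kronecker product, which realizes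
the Hadamard product `r * s`. Over `ZMod 2` (a field) `supp (r * s) = supp r ∩ supp s`, and
`r + s + r * s`, the Boolean "or" of `r` and `s`, has support `supp r ∪ supp s`. -/

namespace RevWA

open Kronecker

section RowSparse

variable {S : Type} [Zero S] {I J I' J' : Type}

def RowSparse (M : Matrix I J S) : Prop :=
  ∀ i j j', M i j ≠ 0 → M i j' ≠ 0 → j = j'

theorem RowSparse.submatrix {M : Matrix I J S} (hM : RowSparse M) (r : I' → I)
    {c : J' → J} (hc : Function.Injective c) : RowSparse (M.submatrix r c) :=
  fun i j j' hj hj' => hc (hM (r i) (c j) (c j') hj hj')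

theorem RowSparse.fromBlocks {A : Matrix I J S} {B : Matrix I' J' S}
    (hA : RowSparse A) (hB : RowSparse B) : RowSparse (Matrix.fromBlocks A 0 0 B) := by
  rintro (i | i) (j | j) (j' | j') hj hj' <;>
    simp only [fromBlocks_apply₁₁, fromBlocks_apply₁₂, fromBlocks_apply₂₁, fromBlocks_apply₂₂,
      Matrix.zero_apply, ne_eq, not_true_eq_false] at hj hj'
  · exact congrArg Sum.inl (hA i j j' hj hj')
  · exact congrArg Sum.inr (hB i j j' hj hj')

end RowSparse

theorem RowSparse.kronecker {S I J I' J' : Type} [MulZeroClass S] {A : Matrix I J S}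
    {B : Matrix I' J' S} (hA : RowSparse A) (hB : RowSparse B) : RowSparse (A ⊗ₖ B) := by
  rintro ⟨i, i'⟩ ⟨j, j'⟩ ⟨k, k'⟩ hj hk
  simp only [kroneckerMap_apply] at hj hk
  exact Prod.ext (hA i j k (left_ne_zero_of_mul hj) (left_ne_zero_of_mul hk))
    (hB i' j' k' (right_ne_zero_of_mul hj) (right_ne_zero_of_mul hk))

theorem rowOk_iff_rowSparse {S : Type} [Semiring S] {n : ℕ} (M : Matrix (Fin n) (Fin n) S) :
    rowOk M ↔ RowSparse M :=
  Iff.rfl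

theorem colOk_iff_rowSparse_transpose {S : Type} [Semiring S] {n : ℕ}
    (M : Matrix (Fin n) (Fin n) S) :
    colOk M ↔ RowSparse Mᵀ :=
  ⟨fun h j i i' hi hi' => h i i' j hi hi', fun h i i' j hi hi' => h j i i' hi hi'⟩

theorem WA.reversible_iff {S α : Type} [Semiring S] (A : WA S α) :
    A.Reversible ↔ ∀ a, RowSparse (A.trans a) ∧ RowSparse (A.trans a)ᵀ := by
  simp only [WA.Reversible, rowOk_iff_rowSparse, colOk_iff_rowSparse_transpose]

theorem list_prod_map_fromBlocks {S : Type} [Semiring S] {I J ι : Type} [Fintype I] [Fintype J]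
    [DecidableEq I] [DecidableEq J] (f : ι → Matrix I I S) (g : ι → Matrix J J S) (l : List ι) :
    (l.map fun a => fromBlocks (f a) 0 0 (g a)).prod =
      fromBlocks (l.map f).prod 0 0 (l.map g).prod := by
  induction l with
  | nil => exact fromBlocks_one.symm
  | cons a l ih => simp [ih, fromBlocks_multiply]

theorem list_prod_map_kronecker {S : Type} [CommSemiring S] {I J ι : Type} [Fintype I] [Fintype J]
    [DecidableEq I] [DecidableEq J] (f : ι → Matrix I I S) (g : ι → Matrix J J S) (l : List ι) :
    (l.map fun a => f a ⊗ₖ g a).prod = (l.map f).prod ⊗ₖ (l.map g).prod := by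
  induction l with
  | nil => exact one_kronecker_one.symm
  | cons a l ih => simp [ih, mul_kronecker_mul]

theorem dotProduct_kronecker_mulVec {S : Type} [CommSemiring S] {I J : Type}
    [Fintype I] [Fintype J]
    (u v : I → S) (x y : J → S) (M : Matrix I I S) (N : Matrix J J S) :
    (fun p : I × J => u p.1 * x p.2) ⬝ᵥ ((M ⊗ₖ N) *ᵥ fun p => v p.1 * y p.2)
      = (u ⬝ᵥ M *ᵥ v) * (x ⬝ᵥ N *ᵥ y) := by
  have hmulVec :
      (M ⊗ₖ N) *ᵥ (fun p => v p.1 * y p.2) = fun p => (M *ᵥ v) p.1 * (N *ᵥ y) p.2 := by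
    funext p
    simp only [mulVec, dotProduct, kroneckerMap_apply, Fintype.sum_prod_type, Finset.sum_mul_sum,
      mul_mul_mul_comm]
  rw [hmulVec]
  simp only [dotProduct, Fintype.sum_prod_type, Finset.sum_mul_sum, mul_mul_mul_comm]

section OfFintype

variable {S : Type} [Semiring S] {α Q : Type} [Fintype Q] [DecidableEq Q]

noncomputable def WA.ofFintype (i : Q → S) (μ : α → Matrix Q Q S) (f : Q → S) : WA S α where
  n := Fintype.card Q
  init := i ∘ (Fintype.equivFin Q).symm
  trans a := reindex (Fintype.equivFin Q) (Fintype.equivFin Q) (μ a)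
  final := f ∘ (Fintype.equivFin Q).symm

theorem WA.ofFintype_series (i : Q → S) (μ : α → Matrix Q Q S) (f : Q → S) (w : List α) :
    (WA.ofFintype i μ f).series w = i ⬝ᵥ (w.map μ).prod *ᵥ f := by
  set e := Fintype.equivFin Q
  have hmat : (WA.ofFintype i μ f).matWord w = reindex e e (w.map μ).prod := by
    rw [WA.matWord, ← coe_reindexRingEquiv, map_list_prod, List.map_map]
    rfl
  calc _ = i ∘ e.symm ⬝ᵥ reindex e e (w.map μ).prod *ᵥ f ∘ e.symm := by
        rw [WA.series, hmat]; rfl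
    _ = _ := by
      rw [reindex_apply, submatrix_mulVec_equiv, Function.comp_assoc, Equiv.symm_symm,
        Equiv.symm_comp_self, Function.comp_id]
      exact comp_equiv_dotProduct_comp_equiv ..

omit [DecidableEq Q] in
theorem WA.ofFintype_reversible (i : Q → S) {μ : α → Matrix Q Q S} (f : Q → S)
    (hμ : ∀ a, RowSparse (μ a) ∧ RowSparse (μ a)ᵀ) : (WA.ofFintype i μ f).Reversible := by
  refine (WA.reversible_iff _).2 fun a => ?_
  exact ⟨(hμ a).1.submatrix _ (Equiv.injective _), (hμ a).2.submatrix _ (Equiv.injective _)⟩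

end OfFintype

section Closure

variable {S : Type} {α : Type}

noncomputable def WA.sum [Semiring S] (A B : WA S α) : WA S α :=
  WA.ofFintype (Sum.elim A.init B.init) (fun a => fromBlocks (A.trans a) 0 0 (B.trans a))
    (Sum.elim A.final B.final)

theorem WA.sum_series [Semiring S] (A B : WA S α) : (A.sum B).series = A.series + B.series := by
  funext w
  rw [WA.sum, WA.ofFintype_series, list_prod_map_fromBlocks, fromBlocks_mulVec,
    sumElim_dotProduct_sumElim]
  simp only [zero_mulVec, add_zero, zero_add, Sum.elim_comp_inl, Sum.elim_comp_inr]
  rfl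

theorem WA.Reversible.sum [Semiring S] {A B : WA S α} (hA : A.Reversible) (hB : B.Reversible) :
    (A.sum B).Reversible := by
  refine WA.ofFintype_reversible _ _ fun a => ?_
  rw [WA.reversible_iff] at hA hB
  rw [fromBlocks_transpose, transpose_zero]
  exact ⟨(hA a).1.fromBlocks (hB a).1, (hA a).2.fromBlocks (hB a).2⟩

noncomputable def WA.kronecker [CommSemiring S] (A B : WA S α) : WA S α :=
  WA.ofFintype (fun p => A.init p.1 * B.init p.2) (fun a => A.trans a ⊗ₖ B.trans a)
    (fun p => A.final p.1 * B.final p.2)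

theorem WA.kronecker_series [CommSemiring S] (A B : WA S α) :
    (A.kronecker B).series = A.series * B.series := by
  funext w
  rw [WA.kronecker, WA.ofFintype_series, list_prod_map_kronecker, dotProduct_kronecker_mulVec]
  rfl

theorem WA.Reversible.kronecker [CommSemiring S] {A B : WA S α} (hA : A.Reversible)
    (hB : B.Reversible) : (A.kronecker B).Reversible := by
  refine WA.ofFintype_reversible _ _ fun a => ?_
  rw [WA.reversible_iff] at hA hB
  rw [← kroneckerMap_transpose]
  exact ⟨(hA a).1.kronecker (hB a).1, (hA a).2.kronecker (hB a).2⟩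

theorem add_mem_rev [Semiring S] {r s : List α → S} (hr : r ∈ Rev S α) (hs : s ∈ Rev S α) :
    r + s ∈ Rev S α := by
  obtain ⟨A, hA, rfl⟩ := hr
  obtain ⟨B, hB, rfl⟩ := hs
  exact ⟨A.sum B, hA.sum hB, A.sum_series B⟩

theorem mul_mem_rev [CommSemiring S] {r s : List α → S} (hr : r ∈ Rev S α) (hs : s ∈ Rev S α) :
    r * s ∈ Rev S α := by
  obtain ⟨A, hA, rfl⟩ := hr
  obtain ⟨B, hB, rfl⟩ := hs
  exact ⟨A.kronecker B, hA.kronecker hB, A.kronecker_series B⟩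

end Closure

theorem supp_mul {S α : Type} [Semiring S] [NoZeroDivisors S] (r s : List α → S) :
    supp (r * s) = supp r ∩ supp s := by
  ext w
  exact mul_ne_zero_iff

theorem supp_add_add_mul {α : Type} (r s : List α → ZMod 2) :
    supp (r + s + r * s) = supp r ∪ supp s := by
  ext w
  change r w + s w + r w * s w ≠ 0 ↔ r w ≠ 0 ∨ s w ≠ 0
  generalize r w = x, s w = y
  revert x y
  decide

end RevWA

open RevWA in
theorem stmt7_general (α : Type)
    (L K : Set (List α)) (hL : L ∈ RevL (ZMod 2) α) (hK : K ∈ RevL (ZMod 2) α) :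
    L ∩ K ∈ RevL (ZMod 2) α ∧ L ∪ K ∈ RevL (ZMod 2) α := by
  obtain ⟨r, hr, rfl⟩ := hL
  obtain ⟨s, hs, rfl⟩ := hK
  exact ⟨⟨r * s, mul_mem_rev hr hs, supp_mul r s⟩,
    ⟨r + s + r * s, add_mem_rev (add_mem_rev hr hs) (mul_mem_rev hr hs), supp_add_add_mul r s⟩⟩

open RevWA in
theorem stmt7 (α : Type) [Fintype α] [Nonempty α]
    (L K : Set (List α)) (hL : L ∈ RevL (ZMod 2) α) (hK : K ∈ RevL (ZMod 2) α) :
    L ∩ K ∈ RevL (ZMod 2) α ∧ L ∪ K ∈ RevL (ZMod 2) α :=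
  stmt7_general α L K hL hK
end
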